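/- arXiv:2008.04495 — 5 statements merged into one kernel-verified Lean document; each statement's English description precedes it below -/
import Mathlib

section
/- Let $\Omega$ be a finite set, $\mu_x, \mu_y$ probability mass functions on $\Omega$, and $M : \Omega \to [0,1]$. Fix $t > 0$ and let $S_1 = \{\omega : \mu_x(\omega) < t\cdot \mu_y(\omega)\}$, $S_2 = \{\omega : \mu_x(\omega) = t\cdot \mu_y(\omega)\}$, and $S = S_1 \cup S_3$ for some $S_3 \subseteq S_2$. If $\sum_{\omega} M(\omega)\mu_x(\omega) \le \sum_{\omega \in S} \mu_x(\omega)$, then $\sum_{\omega} M(\omega)\mu_y(\omega) \le \sum_{\omega \in S} \mu_y(\omega)$. -/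
/-- Discrete Neyman-Pearson lemma, first part. -/
theorem neyman_pearson_le {Ω : Type*} [Fintype Ω] [DecidableEq Ω]
    (μx μy M : Ω → ℝ)
    (hμx0 : ∀ ω, 0 ≤ μx ω) (hμx1 : ∑ ω, μx ω = 1)
    (hμy0 : ∀ ω, 0 ≤ μy ω) (hμy1 : ∑ ω, μy ω = 1)
    (hM0 : ∀ ω, 0 ≤ M ω) (hM1 : ∀ ω, M ω ≤ 1)
    (t : ℝ) (ht : 0 < t)
    (S1 S2 S3 S : Finset Ω)
    (hS1 : ∀ ω, ω ∈ S1 ↔ μx ω < t * μy ω)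
    (hS2 : ∀ ω, ω ∈ S2 ↔ μx ω = t * μy ω)
    (hS3 : S3 ⊆ S2) (hS : S = S1 ∪ S3)
    (h : ∑ ω, M ω * μx ω ≤ ∑ ω ∈ S, μx ω) :
    ∑ ω, M ω * μy ω ≤ ∑ ω ∈ S, μy ω := by
  have key : 0 ≤ ∑ ω, ((if ω ∈ S then (1:ℝ) else 0) - M ω) * (t * μy ω - μx ω) := by
    apply Finset.sum_nonneg
    intro ω _
    by_cases hω : ω ∈ S
    · simp only [hω, if_pos]
      apply mul_nonneg (by linarith [hM1 ω])
      rw [hS, Finset.mem_union] at hω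
      rcases hω with h1 | h3
      · linarith [(hS1 ω).1 h1]
      · linarith [(hS2 ω).1 (hS3 h3)]
    · simp only [hω, if_neg, not_false_iff]
      have h1 : ω ∉ S1 := fun hh => hω (hS ▸ Finset.mem_union_left _ hh)
      have := (hS1 ω).not.1 h1
      push_neg at this
      have := hM0 ω
      nlinarith
  have e1 : ∑ ω, (if ω ∈ S then (1:ℝ) else 0) * (t * μy ω - μx ω)
      = ∑ ω ∈ S, (t * μy ω - μx ω) := by
    simp only [ite_mul, one_mul, zero_mul]
    rw [Finset.sum_ite_mem, Finset.univ_inter]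
  have expand : ∑ ω, ((if ω ∈ S then (1:ℝ) else 0) - M ω) * (t * μy ω - μx ω)
      = (∑ ω ∈ S, (t * μy ω - μx ω)) - ∑ ω, M ω * (t * μy ω - μx ω) := by
    rw [← e1, ← Finset.sum_sub_distrib]
    congr 1; ext ω; ring
  rw [expand] at key
  have e2 : ∑ ω ∈ S, (t * μy ω - μx ω) = t * (∑ ω ∈ S, μy ω) - ∑ ω ∈ S, μx ω := by
    rw [Finset.sum_sub_distrib, Finset.mul_sum]
  have e3 : ∑ ω, M ω * (t * μy ω - μx ω)
      = t * (∑ ω, M ω * μy ω) - ∑ ω, M ω * μx ω := by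
    rw [Finset.mul_sum, ← Finset.sum_sub_distrib]
    congr 1; ext ω; ring
  rw [e2, e3] at key
  nlinarith
end

section
/- Let $n \ge 1$, $k \ge 1$ be integers, and let $p_l, p_s \in [0,1]$ with $p_l \ge p_s$ and $p_l - p_s \le 2$ (trivially true). For a data poisoning attack that only modifies existing training examples (so $n' = n$ and $m = n - r$), the constraint $(n'/n)^k - 2\cdot(m/n)^k + 1 - \Delta < 0$ with $\Delta = p_l - p_s - \delta_l - \delta_s$ holds for a nonnegative integer $r$ if and only if $r < n \cdot (1 - \sqrt[k]{1 - \Delta/2})$. Consequently the maximal such integer is $r^* = \lceil n(1 - \sqrt[k]{1 - \Delta/2}) \rceil - 1$, assuming $0 < \Delta \le 2$. -/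
/-- Corollary 1 (modification-only attacks): with `n' = n` and `m = n - r`, the
certification constraint holds iff `r < n(1 - (1 - Δ/2)^(1/k))`, and the maximal such
integer is `⌈n(1 - (1 - Δ/2)^(1/k))⌉ - 1`. -/
theorem certified_size_modification (n k : ℕ) (hn : 1 ≤ n) (hk : 1 ≤ k)
    (pl ps δl δs : ℝ) (hpl0 : 0 ≤ pl) (hpl1 : pl ≤ 1) (hps0 : 0 ≤ ps) (hps1 : ps ≤ 1)
    (hls : ps ≤ pl) (hδl : 0 ≤ δl) (hδs : 0 ≤ δs)
    (Δ : ℝ) (hΔdef : Δ = pl - ps - δl - δs) (hΔpos : 0 < Δ) (hΔle : Δ ≤ 2) :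
    (∀ r : ℕ,
      (((n : ℝ) / n) ^ k - 2 * (((n - r : ℕ) : ℝ) / n) ^ k + 1 - Δ < 0 ↔
        (r : ℝ) < n * (1 - (1 - Δ / 2) ^ ((1 : ℝ) / k)))) ∧
    IsGreatest
      {r : ℕ | ((n : ℝ) / n) ^ k - 2 * (((n - r : ℕ) : ℝ) / n) ^ k + 1 - Δ < 0}
      (⌈(n : ℝ) * (1 - (1 - Δ / 2) ^ ((1 : ℝ) / k))⌉ - 1).toNat := by
  have hn0 : (0:ℝ) < n := by exact_mod_cast hn
  have hk0 : k ≠ 0 := by omega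
  have hkR : (0:ℝ) < k := by exact_mod_cast hk
  set c : ℝ := 1 - Δ/2 with hc
  have hc0 : 0 ≤ c := by rw [hc]; linarith
  have hc1 : c < 1 := by rw [hc]; linarith
  have hek : (0:ℝ) < 1/k := by positivity
  have hck : (0:ℝ) ≤ c ^ ((1:ℝ)/k) := Real.rpow_nonneg hc0 _
  have hck1 : c ^ ((1:ℝ)/k) < 1 := Real.rpow_lt_one hc0 hc1 hek
  set B : ℝ := (n:ℝ) * (1 - c ^ ((1:ℝ)/k)) with hB
  have hB0 : 0 < B := by apply mul_pos hn0; linarith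
  have hBn : B ≤ n := by nlinarith
  have hpow : (c ^ ((1:ℝ)/k)) ^ k = c := by
    rw [← Real.rpow_natCast (c ^ ((1:ℝ)/k)) k, ← Real.rpow_mul hc0]
    rw [one_div, inv_mul_cancel₀ (by exact_mod_cast hk0), Real.rpow_one]
  have key : ∀ r : ℕ,
      (((n : ℝ) / n) ^ k - 2 * (((n - r : ℕ) : ℝ) / n) ^ k + 1 - Δ < 0 ↔ (r : ℝ) < B) := by
    intro r
    rw [div_self (ne_of_gt hn0), one_pow]
    rcases le_or_gt r n with hr | hr
    · have hcast : ((n - r : ℕ) : ℝ) = (n:ℝ) - r := by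
        rw [Nat.cast_sub hr]
      rw [hcast]
      set x : ℝ := ((n:ℝ) - r)/n with hx
      have hrn : (r:ℝ) ≤ n := by exact_mod_cast hr
      have hx0 : 0 ≤ x := by
        apply div_nonneg _ (le_of_lt hn0); linarith
      have h1 : c < x ^ k ↔ c ^ ((1:ℝ)/k) < x := by
        nth_rewrite 1 [← hpow]
        exact pow_lt_pow_iff_left₀ hck hx0 hk0
      have h2 : c ^ ((1:ℝ)/k) < x ↔ (r:ℝ) < B := by
        rw [hx, lt_div_iff₀ hn0, hB]
        constructor <;> intro <;> nlinarith
      constructor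
      · intro h
        rw [← h2, ← h1, hc]; linarith
      · intro h
        have := h1.mpr (h2.mpr h)
        rw [hc] at this; linarith
    · have hz : n - r = 0 := Nat.sub_eq_zero_of_le (le_of_lt hr)
      rw [hz]
      have hrn : (n:ℝ) < r := by exact_mod_cast hr
      simp only [Nat.cast_zero, zero_div, zero_pow hk0]
      constructor
      · intro h; exfalso; rw [hc] at *; linarith
      · intro h; exfalso; linarith
  refine ⟨key, ?_, ?_⟩
  · have hceil : 0 < ⌈B⌉ := Int.ceil_pos.mpr hB0
    have htn : ((⌈B⌉ - 1).toNat : ℤ) = ⌈B⌉ - 1 := Int.toNat_of_nonneg (by omega)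
    rw [Set.mem_setOf_eq, key]
    have h3 : (((⌈B⌉ - 1).toNat : ℕ) : ℝ) = (⌈B⌉ : ℝ) - 1 := by
      rw [← Int.cast_natCast, htn]; push_cast; ring
    rw [h3]
    linarith [Int.ceil_lt_add_one B]
  · intro r hr
    rw [Set.mem_setOf_eq, key] at hr
    have h4 : ((r:ℤ) : ℝ) < B := by push_cast; exact hr
    have h5 : (r:ℤ) < ⌈B⌉ := Int.lt_ceil.mpr h4
    omega
end

section
/- Let $n \ge 1$, $k \ge 1$ be integers and $\Delta \in (0, 1]$. For deletion-only attacks (so $n' = n - r$, $m = n - r$), the constraint $((n-r)/n)^k - 2\cdot((n-r)/n)^k + 1 - \Delta < 0$ holds for a nonnegative integer $r < n$ if and only if $r < n \cdot (1 - \sqrt[k]{1 - \Delta})$. Consequently the maximal such integer is $r^* = \lceil n(1 - \sqrt[k]{1-\Delta}) \rceil - 1$. -/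
/-! After deleting `r` of `n` points the surviving fraction is `x = (n - r)/n`, and the
certification constraint reduces to `1 - Δ < x ^ k`, i.e. `c < x` for the `k`-th root
`c = (1 - Δ) ^ (1/k)`, i.e. `r < n (1 - c)`. The largest natural number strictly below the
positive real `n (1 - c)` is `⌈n (1 - c)⌉ - 1`. -/

lemma isGreatest_natCast_lt_ceil_sub_one {M : ℝ} (hM : 0 < M) :
    IsGreatest {r : ℕ | (r : ℝ) < M} (⌈M⌉ - 1).toNat := by
  have hceil : 1 ≤ ⌈M⌉ := Int.one_le_ceil_iff.mpr hM
  refine ⟨?_, fun r hr => ?_⟩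
  · have hcast : (((⌈M⌉ - 1).toNat : ℕ) : ℝ) = ((⌈M⌉ - 1 : ℤ) : ℝ) := by
      exact_mod_cast Int.toNat_of_nonneg (by omega)
    simp only [Set.mem_ofPred_eq, hcast, Int.cast_sub, Int.cast_one]
    linarith [Int.ceil_lt_add_one M]
  · have : (r : ℤ) < ⌈M⌉ := Int.lt_ceil.mpr (by exact_mod_cast hr)
    omega

lemma rpow_one_div_natCast_pow {a : ℝ} (ha : 0 ≤ a) {k : ℕ} (hk : k ≠ 0) :
    (a ^ ((1 : ℝ) / k)) ^ k = a := by
  rw [one_div, Real.rpow_inv_natCast_pow ha hk]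

lemma lt_sub_div_iff_lt_mul_one_sub {n r c : ℝ} (hn : 0 < n) :
    c < (n - r) / n ↔ r < n * (1 - c) := by
  rw [lt_div_iff₀ hn]
  constructor <;> intro h <;> linarith

lemma deletion_constraint_iff {n k r : ℕ} (hn : 0 < n) (hk : k ≠ 0) (hr : r ≤ n)
    {Δ c : ℝ} (hc : 0 ≤ c) (hck : c ^ k = 1 - Δ) :
    (((n - r : ℕ) : ℝ) / n) ^ k - 2 * (((n - r : ℕ) : ℝ) / n) ^ k + 1 - Δ < 0 ↔
      (r : ℝ) < n * (1 - c) := by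
  set x : ℝ := ((n - r : ℕ) : ℝ) / n with hx
  have hreduce : x ^ k - 2 * x ^ k + 1 - Δ < 0 ↔ c ^ k < x ^ k := by
    rw [hck]
    constructor <;> intro h <;> linarith
  rw [hreduce, pow_lt_pow_iff_left₀ hc (by positivity) hk, hx, Nat.cast_sub hr]
  exact lt_sub_div_iff_lt_mul_one_sub (by exact_mod_cast hn)

/-- Corollary 2 (deletion-only attacks): with `n' = m = n - r`, the certification
constraint holds for `0 ≤ r < n` iff `r < n(1 - (1 - Δ)^(1/k))`, and the maximal such
integer is `⌈n(1 - (1 - Δ)^(1/k))⌉ - 1`. -/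
theorem certified_size_deletion (n k : ℕ) (hn : 1 ≤ n) (hk : 1 ≤ k)
    (Δ : ℝ) (hΔpos : 0 < Δ) (hΔle : Δ ≤ 1) :
    (∀ r : ℕ, r < n →
      ((((n - r : ℕ) : ℝ) / n) ^ k - 2 * (((n - r : ℕ) : ℝ) / n) ^ k + 1 - Δ < 0 ↔
        (r : ℝ) < n * (1 - (1 - Δ) ^ ((1 : ℝ) / k)))) ∧
    IsGreatest
      {r : ℕ | r < n ∧
        (((n - r : ℕ) : ℝ) / n) ^ k - 2 * (((n - r : ℕ) : ℝ) / n) ^ k + 1 - Δ < 0}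
      (⌈(n : ℝ) * (1 - (1 - Δ) ^ ((1 : ℝ) / k))⌉ - 1).toNat := by
  set c : ℝ := (1 - Δ) ^ ((1 : ℝ) / k)
  have hk₀ : k ≠ 0 := by omega
  have hn₀ : (0 : ℝ) < n := by exact_mod_cast hn
  have hc₀ : 0 ≤ c := Real.rpow_nonneg (by linarith) _
  have hc₁ : c < 1 := Real.rpow_lt_one (by linarith) (by linarith) (by positivity)
  have key (r : ℕ) (hr : r ≤ n) := deletion_constraint_iff (by omega) hk₀ hr hc₀
    (rpow_one_div_natCast_pow (by linarith : 0 ≤ 1 - Δ) hk₀)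
  refine ⟨fun r hr => key r hr.le, ?_⟩
  have hset : {r : ℕ | r < n ∧
      (((n - r : ℕ) : ℝ) / n) ^ k - 2 * (((n - r : ℕ) : ℝ) / n) ^ k + 1 - Δ < 0} =
      {r : ℕ | (r : ℝ) < n * (1 - c)} := by
    ext r
    refine ⟨fun ⟨hr, h⟩ => (key r hr.le).mp h, fun (h : (r : ℝ) < n * (1 - c)) => ?_⟩
    have hrn : r < n := by
      have : (r : ℝ) < n := by nlinarith
      exact_mod_cast this
    exact ⟨hrn, (key r hrn.le).mpr h⟩
  rw [hset]
  exact isGreatest_natCast_lt_ceil_sub_one (mul_pos hn₀ (by linarith))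
end

section
/- Fix integers $n \ge 1$, $k \ge 2$, $0 < r \le n$, and a real constant $c$. Define, for integers $n' \in [n-r, n+r]$, $L(n') = (n'/n)^k - 2\cdot((\max(n,n') - r)/n)^k + c$. If $r \le n(1 - 2^{-1/(k-1)})$, then $L(n') \le L(n)$ for all $n' \in [n-r, n+r]$. -/
/-!
On `n' ≤ n` only the first power moves, and it grows with `n'`. For `n' ≥ n`, put `x = n'/n`
and `ρ = r/n`; then `L = x^k - 2(x - ρ)^k + c`, whose derivative `k (x^(k-1) - 2(x - ρ)^(k-1))`
is nonpositive on `x ≥ 1` as soon as `x - ρ ≥ s x` with `s^(k-1) = 1/2`, i.e. `s = 2^(-1/(k-1))`.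
The hypothesis `ρ ≤ 1 - s` gives exactly this, since `x - ρ - s x ≥ (x - 1)(1 - s) ≥ 0`.
-/

open Set

theorem Real.rpow_neg_one_div_natCast_pow {x : ℝ} (hx : 0 ≤ x) {m : ℕ} (hm : m ≠ 0) :
    (x ^ (-1 / (m : ℝ))) ^ m = x⁻¹ := by
  rw [neg_div, one_div, Real.rpow_neg hx, inv_pow, Real.rpow_inv_natCast_pow hx hm]

theorem antitoneOn_pow_sub_two_mul_sub_pow {k : ℕ} {ρ s : ℝ} (hs0 : 0 ≤ s) (hs1 : s ≤ 1)
    (hsk : 1 ≤ 2 * s ^ (k - 1)) (hρ : ρ ≤ 1 - s) :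
    AntitoneOn (fun x : ℝ => x ^ k - 2 * (x - ρ) ^ k) (Ici 1) := by
  have hderiv : ∀ x : ℝ, HasDerivAt (fun x : ℝ => x ^ k - 2 * (x - ρ) ^ k)
      (k * (x ^ (k - 1) - 2 * (x - ρ) ^ (k - 1))) x := fun x => by
    refine ((hasDerivAt_pow k x).sub
      ((((hasDerivAt_id x).sub_const ρ).pow k).const_mul 2)).congr_deriv ?_
    simp only [id]; ring
  refine antitoneOn_of_deriv_nonpos (convex_Ici 1)
    (fun x _ => (hderiv x).continuousAt.continuousWithinAt)
    (fun x _ => (hderiv x).differentiableAt.differentiableWithinAt) fun x hx => ?_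
  have hx : 1 < x := by simpa using hx
  have hsx : s * x ≤ x - ρ := by nlinarith
  have hpow : x ^ (k - 1) ≤ 2 * (x - ρ) ^ (k - 1) :=
    calc x ^ (k - 1) ≤ 2 * s ^ (k - 1) * x ^ (k - 1) :=
          le_mul_of_one_le_left (by positivity) hsk
      _ = 2 * (s * x) ^ (k - 1) := by rw [mul_pow, mul_assoc]
      _ ≤ 2 * (x - ρ) ^ (k - 1) := by gcongr
  rw [(hderiv x).deriv]
  exact mul_nonpos_of_nonneg_of_nonpos k.cast_nonneg (by linarith)

theorem L_max_at_n_general (n k r : ℕ) (hn : 1 ≤ n) (hk : 2 ≤ k)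
    (c : ℝ) (hr : (r : ℝ) ≤ (n : ℝ) * (1 - (2 : ℝ) ^ (-(1 : ℝ) / ((k : ℝ) - 1)))) :
    ∀ n' : ℕ, n - r ≤ n' → n' ≤ n + r →
      ((n' : ℝ) / n) ^ k - 2 * (((max n n' - r : ℕ) : ℝ) / n) ^ k + c ≤
        ((n : ℝ) / n) ^ k - 2 * (((n - r : ℕ) : ℝ) / n) ^ k + c := by
  intro n' _ _
  have hn0 : (0 : ℝ) < n := by exact_mod_cast hn
  set s : ℝ := (2 : ℝ) ^ (-(1 : ℝ) / ((k : ℝ) - 1)) with hs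
  have hs0 : 0 ≤ s := by positivity
  have hs1 : s ≤ 1 :=
    Real.rpow_le_one_of_one_le_of_nonpos one_le_two (div_nonpos_of_nonpos_of_nonneg
      (by norm_num) (by linarith [show (2 : ℝ) ≤ k by exact_mod_cast hk]))
  have hsk : s ^ (k - 1) = 2⁻¹ := by
    rw [hs, show (k : ℝ) - 1 = (k - 1 : ℕ) by push_cast [Nat.cast_sub (by omega : 1 ≤ k)]; ring,
      Real.rpow_neg_one_div_natCast_pow zero_le_two (by omega)]
  have hρ : (r : ℝ) / n ≤ 1 - s := by rwa [div_le_iff₀ hn0, mul_comm]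
  have hrn : r ≤ n := by
    exact_mod_cast hr.trans (mul_le_of_le_one_right hn0.le (by linarith))
  rcases le_or_gt n' n with hle | hlt
  · rw [max_eq_left hle]
    gcongr
  · have hx : (1 : ℝ) ≤ n' / n := by
      rw [one_le_div hn0]; exact_mod_cast hlt.le
    have key := antitoneOn_pow_sub_two_mul_sub_pow hs0 hs1 (by rw [hsk]; norm_num) hρ
      self_mem_Ici hx hx
    rw [max_eq_right hlt.le, Nat.cast_sub hrn, Nat.cast_sub (hrn.trans hlt.le), sub_div, sub_div,
      div_self hn0.ne']
    simpa only [add_le_add_iff_right] using key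

/-- Case I of the analytical maximization: if `r ≤ n(1 - 2^{-1/(k-1)})`, then the
constraint function `L(n') = (n'/n)^k - 2((max(n,n')-r)/n)^k + c` attains its maximum
over integers `n' ∈ [n-r, n+r]` at `n' = n`. -/
theorem L_max_at_n (n k r : ℕ) (hn : 1 ≤ n) (hk : 2 ≤ k) (hr0 : 0 < r) (hrn : r ≤ n)
    (c : ℝ) (hr : (r : ℝ) ≤ (n : ℝ) * (1 - (2 : ℝ) ^ (-(1 : ℝ) / ((k : ℝ) - 1)))) :
    ∀ n' : ℕ, n - r ≤ n' → n' ≤ n + r →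
      ((n' : ℝ) / n) ^ k - 2 * (((max n n' - r : ℕ) : ℝ) / n) ^ k + c ≤
        ((n : ℝ) / n) ^ k - 2 * (((n - r : ℕ) : ℝ) / n) ^ k + c :=
  L_max_at_n_general n k r hn hk c hr
end

section
/- Fix integers $n \ge 1$, $k \ge 2$, $r > 0$, and a real constant $c$. Define, for integers $n' \in [n-r, n+r]$, $L(n') = (n'/n)^k - 2\cdot((\max(n,n')-r)/n)^k + c$. If $r \ge n(\sqrt[k-1]{2} - 1)$, then $L(n') \le L(n+r)$ for all $n' \in [n-r, n+r]$. -/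
/-- Key algebraic inequality: if `a^(k-1) = 2`, `a*u ≤ x`, `a*v ≤ y`, `v - u ≤ y - x`
(with appropriate nonnegativity), then `x^k - 2u^k ≤ y^k - 2v^k`. -/
lemma key_ineq (k : ℕ) (a u v x y : ℝ)
    (hu : 0 ≤ u) (huv : u ≤ v) (hx : 0 ≤ x) (hd : v - u ≤ y - x)
    (hau : a * u ≤ x) (hav : a * v ≤ y) (hak : a ^ (k - 1) = 2) (ha1 : 1 ≤ a) :
    x ^ k - 2 * u ^ k ≤ y ^ k - 2 * v ^ k := by
  have hv : 0 ≤ v := hu.trans huv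
  have ha0 : 0 ≤ a := by linarith
  have hy : 0 ≤ y := le_trans (mul_nonneg ha0 hv) hav
  have hS1 := geom_sum₂_mul v u k
  have hS2 := geom_sum₂_mul y x k
  set S1 := ∑ i ∈ Finset.range k, v ^ i * u ^ (k - 1 - i) with hS1def
  set S2 := ∑ i ∈ Finset.range k, y ^ i * x ^ (k - 1 - i) with hS2def
  have hterm : ∀ i ∈ Finset.range k,
      2 * (v ^ i * u ^ (k - 1 - i)) ≤ y ^ i * x ^ (k - 1 - i) := by
    intro i hi
    have hik : i < k := Finset.mem_range.mp hi
    have hexp : i + (k - 1 - i) = k - 1 := by omega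
    have h1 : (a * v) ^ i ≤ y ^ i := pow_le_pow_left₀ (mul_nonneg ha0 hv) hav i
    have h2 : (a * u) ^ (k - 1 - i) ≤ x ^ (k - 1 - i) :=
      pow_le_pow_left₀ (mul_nonneg ha0 hu) hau _
    calc 2 * (v ^ i * u ^ (k - 1 - i))
        = a ^ (k - 1) * (v ^ i * u ^ (k - 1 - i)) := by rw [hak]
      _ = (a ^ i * a ^ (k - 1 - i)) * (v ^ i * u ^ (k - 1 - i)) := by
            rw [← pow_add, hexp]
      _ = (a * v) ^ i * (a * u) ^ (k - 1 - i) := by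
            rw [mul_pow, mul_pow]; ring
      _ ≤ y ^ i * x ^ (k - 1 - i) :=
            mul_le_mul h1 h2 (pow_nonneg (mul_nonneg ha0 hu) _) (pow_nonneg hy i)
  have hsum : 2 * S1 ≤ S2 := by
    rw [hS1def, hS2def, Finset.mul_sum]
    exact Finset.sum_le_sum hterm
  have hS1n : 0 ≤ S1 := Finset.sum_nonneg fun i _ =>
    mul_nonneg (pow_nonneg hv i) (pow_nonneg hu _)
  have hS2n : 0 ≤ S2 := Finset.sum_nonneg fun i _ =>
    mul_nonneg (pow_nonneg hy i) (pow_nonneg hx _)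
  have huv' : 0 ≤ v - u := by linarith
  have hchain : 2 * (v ^ k - u ^ k) ≤ y ^ k - x ^ k := by
    calc 2 * (v ^ k - u ^ k) = (2 * S1) * (v - u) := by rw [← hS1]; ring
      _ ≤ S2 * (v - u) := mul_le_mul_of_nonneg_right hsum huv'
      _ ≤ S2 * (y - x) := mul_le_mul_of_nonneg_left (by linarith) hS2n
      _ = y ^ k - x ^ k := hS2
  linarith

/-- Case III of the analytical maximization: if `r ≥ n(2^{1/(k-1)} - 1)`, then the
constraint function `L(n') = (n'/n)^k - 2((max(n,n')-r)/n)^k + c` attains its maximum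
over integers `n' ∈ [n-r, n+r]` at `n' = n + r`. -/
theorem L_max_at_n_add_r (n k r : ℕ) (hn : 1 ≤ n) (hk : 2 ≤ k) (hr0 : 0 < r)
    (c : ℝ) (hr : (n : ℝ) * ((2 : ℝ) ^ ((1 : ℝ) / ((k : ℝ) - 1)) - 1) ≤ (r : ℝ)) :
    ∀ n' : ℕ, n - r ≤ n' → n' ≤ n + r →
      ((n' : ℝ) / n) ^ k - 2 * (((max n n' - r : ℕ) : ℝ) / n) ^ k + c ≤
        (((n + r : ℕ) : ℝ) / n) ^ k - 2 * (((max n (n + r) - r : ℕ) : ℝ) / n) ^ k + c := by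
  intro n' _ h2
  have hN : (0 : ℝ) < (n : ℝ) := by exact_mod_cast hn
  have hk2 : (2 : ℝ) ≤ (k : ℝ) := by exact_mod_cast hk
  set a : ℝ := (2 : ℝ) ^ ((1 : ℝ) / ((k : ℝ) - 1)) with hadef
  have hk1 : ((k : ℝ) - 1) ≠ 0 := by linarith
  have ha1 : (1 : ℝ) ≤ a := by
    rw [hadef]
    apply Real.one_le_rpow (by norm_num)
    exact div_nonneg zero_le_one (by linarith)
  have hak : a ^ (k - 1) = 2 := by
    rw [hadef, ← Real.rpow_natCast ((2:ℝ) ^ ((1 : ℝ) / ((k : ℝ) - 1))) (k-1),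
      ← Real.rpow_mul (by norm_num)]
    have hc : ((k - 1 : ℕ) : ℝ) = (k : ℝ) - 1 := by
      have : 1 ≤ k := by omega
      push_cast [this]; ring
    rw [hc, one_div, inv_mul_cancel₀ hk1, Real.rpow_one]
  have hmax2 : max n (n + r) - r = n := by
    rw [max_eq_right (Nat.le_add_right n r), Nat.add_sub_cancel]
  rw [hmax2]
  have hav : a * (n : ℝ) ≤ ((n + r : ℕ) : ℝ) := by push_cast; nlinarith
  have hrnn : (0:ℝ) ≤ r := Nat.cast_nonneg r
  rcases le_total n' n with hle | hle
  · -- n' ≤ n : max n n' = n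
    rw [max_eq_left hle]
    have hau : a * ((n - r : ℕ) : ℝ) ≤ (n : ℝ) := by
      rcases le_or_gt r n with h | h
      · rw [Nat.cast_sub h]; nlinarith
      · rw [Nat.sub_eq_zero_of_le h.le]; simp [hN.le]
    have hd : (n : ℝ) - ((n - r : ℕ) : ℝ) ≤ ((n + r : ℕ) : ℝ) - (n : ℝ) := by
      have : n ≤ r + (n - r) := by omega
      have := (Nat.cast_le (α := ℝ)).mpr this
      push_cast at this ⊢
      linarith
    have huv : ((n - r : ℕ) : ℝ) ≤ (n : ℝ) := by
      exact_mod_cast Nat.sub_le n r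
    have hkey := key_ineq k a ((n - r : ℕ) : ℝ) (n : ℝ) (n : ℝ) ((n + r : ℕ) : ℝ)
      (Nat.cast_nonneg _) huv hN.le hd hau hav hak ha1
    have hx' : ((n' : ℝ)) ^ k ≤ ((n : ℝ)) ^ k :=
      pow_le_pow_left₀ (Nat.cast_nonneg _) (by exact_mod_cast hle) k
    have hmain : ((n' : ℝ)) ^ k - 2 * (((n - r : ℕ) : ℝ)) ^ k ≤
        (((n + r : ℕ) : ℝ)) ^ k - 2 * ((n : ℝ)) ^ k := by linarith
    have hdiv : (((n' : ℝ)) ^ k - 2 * (((n - r : ℕ) : ℝ)) ^ k) / (n : ℝ) ^ k ≤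
        ((((n + r : ℕ) : ℝ)) ^ k - 2 * ((n : ℝ)) ^ k) / (n : ℝ) ^ k :=
      (div_le_div_iff_of_pos_right (pow_pos hN k)).mpr hmain
    rw [sub_div, sub_div, mul_div_assoc, mul_div_assoc] at hdiv
    rw [div_pow, div_pow, div_pow, div_pow]
    linarith
  · -- n ≤ n' : max n n' = n'
    rw [max_eq_right hle]
    have hle' : (n' : ℝ) ≤ ((n + r : ℕ) : ℝ) := by exact_mod_cast h2
    have hau : a * ((n' - r : ℕ) : ℝ) ≤ (n' : ℝ) := by
      rcases le_or_gt r n' with h | h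
      · rw [Nat.cast_sub h]
        have hle'' : (n' : ℝ) ≤ (n : ℝ) + r := by push_cast at hle'; linarith
        nlinarith
      · rw [Nat.sub_eq_zero_of_le h.le]
        simp [Nat.cast_nonneg]
    have hd : (n : ℝ) - ((n' - r : ℕ) : ℝ) ≤ ((n + r : ℕ) : ℝ) - (n' : ℝ) := by
      have : n + n' ≤ (n + r) + (n' - r) := by omega
      have := (Nat.cast_le (α := ℝ)).mpr this
      push_cast at this ⊢
      linarith
    have huv : ((n' - r : ℕ) : ℝ) ≤ (n : ℝ) := by
      have : n' - r ≤ n := by omega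
      exact_mod_cast this
    have hkey := key_ineq k a ((n' - r : ℕ) : ℝ) (n : ℝ) (n' : ℝ) ((n + r : ℕ) : ℝ)
      (Nat.cast_nonneg _) huv (Nat.cast_nonneg _) hd hau hav hak ha1
    have hdiv : (((n' : ℝ)) ^ k - 2 * (((n' - r : ℕ) : ℝ)) ^ k) / (n : ℝ) ^ k ≤
        ((((n + r : ℕ) : ℝ)) ^ k - 2 * ((n : ℝ)) ^ k) / (n : ℝ) ^ k :=
      (div_le_div_iff_of_pos_right (pow_pos hN k)).mpr hkey
    rw [sub_div, sub_div, mul_div_assoc, mul_div_assoc] at hdiv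
    rw [div_pow, div_pow, div_pow, div_pow]
    linarith
end
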